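/- arXiv:2403.17557 — 2 statements merged into one kernel-verified Lean document; each statement's English description precedes it below -/
import Mathlib

section
/- Let f : [0,∞) → ℝ be a superquadratic function with f(t) ≥ 0 for all t ≥ 0. Then f is super-additive: f(x) + f(y) ≤ f(x+y) for all x, y ≥ 0. -/
/-- A function `f : [0,∞) → ℝ` is superquadratic if for every `x ≥ 0` there exists a
constant `C ∈ ℝ` such that `f y ≥ f x + C * (y - x) + f |y - x|` for all `y ≥ 0`. -/
def Superquadratic (f : ℝ → ℝ) : Prop :=
  ∀ x : ℝ, 0 ≤ x → ∃ C : ℝ, ∀ y : ℝ, 0 ≤ y → f x + C * (y - x) + f (|y - x|) ≤ f y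

/-! Testing the support inequality at `y = 0` gives `2 f(x) - C x ≤ f(0) ≤ 0`, so a nonnegative
value `f(x)` with `x > 0` forces `C ≥ 0`; testing it at `x + y` then gives
`f(x) + C y + f(y) ≤ f(x + y)`. -/

namespace Superquadratic

variable {f : ℝ → ℝ}

theorem map_zero_nonpos (hf : Superquadratic f) : f 0 ≤ 0 := by
  obtain ⟨C, hC⟩ := hf 0 le_rfl
  simpa using hC 0 le_rfl

theorem exists_nonneg_const (hf : Superquadratic f) {x : ℝ} (hx : 0 < x) (hfx : 0 ≤ f x) :
    ∃ C : ℝ, 0 ≤ C ∧ ∀ y : ℝ, 0 ≤ y → f x + C * (y - x) + f (|y - x|) ≤ f y := by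
  obtain ⟨C, hC⟩ := hf x hx.le
  have hC0 : f x - C * x + f x ≤ f 0 := by
    simpa [abs_of_pos hx, sub_eq_add_neg] using hC 0 le_rfl
  have hCx : 0 ≤ C * x := by linarith [hf.map_zero_nonpos]
  exact ⟨C, nonneg_of_mul_nonneg_left hCx hx, hC⟩

theorem add_le_map_add (hf : Superquadratic f) {x y : ℝ} (hx : 0 < x) (hy : 0 ≤ y)
    (hfx : 0 ≤ f x) : f x + f y ≤ f (x + y) := by
  obtain ⟨C, hC, hCx⟩ := hf.exists_nonneg_const hx hfx
  have h := hCx (x + y) (by linarith)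
  rw [add_sub_cancel_left, abs_of_nonneg hy] at h
  linarith [mul_nonneg hC hy]

end Superquadratic

theorem superquadratic_nonneg_superadditive
    (f : ℝ → ℝ) (hf : Superquadratic f)
    (hf_nonneg : ∀ t : ℝ, 0 ≤ t → 0 ≤ f t)
    (x y : ℝ) (hx : 0 ≤ x) (hy : 0 ≤ y) :
    f x + f y ≤ f (x + y) := by
  rcases hx.eq_or_lt with rfl | hx
  · have hf0 : f 0 = 0 := le_antisymm hf.map_zero_nonpos (hf_nonneg 0 le_rfl)
    simp [hf0]
  · exact hf.add_le_map_add hx hy (hf_nonneg x hx.le)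
end

section
/- Let f : [0,∞) → ℝ be a continuous superquadratic function and let 0 ≤ x < y. Then f((x+y)/2) ≤ (1/(y−x))·∫ₓ^y f(u) du − 2∫₀^{1/2} f(u·|x−y|) du. -/
open Set intervalIntegral

theorem integral_sub_midpoint (a b : ℝ) : ∫ u in a..b, (u - (a + b) / 2) = 0 := by
  rw [integral_comp_sub_right (fun u => u), integral_id]
  ring

theorem integral_comp_abs_sub_midpoint {f : ℝ → ℝ} (hf : Continuous f) {a b : ℝ} (hab : a ≤ b) :
    ∫ u in a..b, f |u - (a + b) / 2| = 2 * ∫ u in (0 : ℝ)..(b - a) / 2, f u := by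
  set m := (a + b) / 2 with hm
  have ham : a ≤ m := by linarith
  have hmb : m ≤ b := by linarith
  have hleft : ∫ u in a..m, f |u - m| = ∫ u in (0 : ℝ)..(b - a) / 2, f u := by
    have h : EqOn (fun u => f |u - m|) (fun u => f (m - u)) (uIcc a m) := by
      intro u hu
      rw [uIcc_of_le ham] at hu
      simp only [abs_sub_comm u m, abs_of_nonneg (sub_nonneg.2 hu.2)]
    rw [integral_congr h, integral_comp_sub_left f m, sub_self, hm]
    ring_nf
  have hright : ∫ u in m..b, f |u - m| = ∫ u in (0 : ℝ)..(b - a) / 2, f u := by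
    have h : EqOn (fun u => f |u - m|) (fun u => f (u - m)) (uIcc m b) := by
      intro u hu
      rw [uIcc_of_le hmb] at hu
      simp only [abs_of_nonneg (sub_nonneg.2 hu.1)]
    rw [integral_congr h, integral_comp_sub_right f m, sub_self, hm]
    ring_nf
  have hcont : Continuous fun u => f |u - m| := by fun_prop
  rw [← integral_add_adjacent_intervals (hcont.intervalIntegrable a m)
    (hcont.intervalIntegrable m b), hleft, hright]
  ring

theorem Superquadratic.mul_midpoint_add_integral_le {f : ℝ → ℝ} (hf : Superquadratic f)
    (hcont : Continuous f) {a b : ℝ} (ha : 0 ≤ a) (hab : a ≤ b) :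
    (b - a) * f ((a + b) / 2) + 2 * ∫ u in (0 : ℝ)..(b - a) / 2, f u ≤ ∫ u in a..b, f u := by
  set m := (a + b) / 2
  obtain ⟨C, hC⟩ := hf m (by simp only [m]; linarith)
  have hlin : Continuous fun u : ℝ => C * (u - m) := by fun_prop
  have habs : Continuous fun u => f |u - m| := by fun_prop
  have hintegrated : ∫ u in a..b, (f m + C * (u - m) + f |u - m|) ≤ ∫ u in a..b, f u :=
    integral_mono_on hab ((by fun_prop : Continuous _).intervalIntegrable a b)
      (hcont.intervalIntegrable a b) fun u hu => hC u (ha.trans hu.1)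
  rwa [integral_add (intervalIntegrable_const.add (hlin.intervalIntegrable a b))
      (habs.intervalIntegrable a b), integral_add intervalIntegrable_const
      (hlin.intervalIntegrable a b), integral_const, integral_const_mul, integral_sub_midpoint,
    integral_comp_abs_sub_midpoint hcont hab, smul_eq_mul, mul_zero, add_zero] at hintegrated

theorem superquadratic_hermite_hadamard_left
    (f : ℝ → ℝ) (hf_cont : Continuous f) (hf : Superquadratic f)
    (x y : ℝ) (hx : 0 ≤ x) (hxy : x < y) :
    f ((x + y) / 2) ≤
      (1 / (y - x)) * (∫ u in x..y, f u) - 2 * (∫ u in (0 : ℝ)..(1 / 2), f (u * |x - y|)) := by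
  have hpos : 0 < y - x := sub_pos.2 hxy
  have hscale : ∫ u in (0 : ℝ)..(1 / 2), f (u * |x - y|)
      = (y - x)⁻¹ * ∫ u in (0 : ℝ)..(y - x) / 2, f u := by
    rw [abs_sub_comm, abs_of_pos hpos, integral_comp_mul_right f hpos.ne', zero_mul, smul_eq_mul,
      one_div_mul_eq_div]
  have hmidpoint := hf.mul_midpoint_add_integral_le hf_cont hx hxy.le
  rw [hscale, one_div]
  field_simp
  linarith
end
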